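/- arXiv:1007.3460 — 3 statements merged into one kernel-verified Lean document; each statement's English description precedes it below -/
import Mathlib

section
/- ∫_0^{π/2} ln(2 cos x) / (x² + ln²(2 cos x)) dx = π/4. -/
/-!
For |x| < π/2 one has 1 + e^{2ix} = 2 cos x · e^{ix}, hence log (1 + e^{2ix}) = ln (2 cos x) + ix and
the integrand is Re (1 / log (1 + e^{2ix})). The function 1 / log (1 + z) - 1 / z has a removable
singularity at 0 with value 1/2, is holomorphic on the open unit disc and continuous up to the
boundary (1 / log (1 + z) → 0 as z → -1). By the mean value property, and since 1/z has circle
average 0, the average of 1 / log (1 + z) over the unit circle is 1/2. Its real part is symmetric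
under θ ↦ 2π - θ, so the integral over [0, π/2] is a quarter of the integral over the full circle,
i.e. (1/4) · 2π · (1/2) = π/4.
-/

open Real Complex ComplexConjugate Filter Metric Set Topology

theorem intervalIntegral.integral_zero_two_mul_of_symm {E : Type*} [NormedAddCommGroup E]
    [NormedSpace ℝ E] {f : ℝ → E} {a : ℝ} (hf : ∀ x, f (2 * a - x) = f x)
    (hint : IntervalIntegrable f MeasureTheory.volume 0 a) :
    ∫ x in 0..2 * a, f x = 2 • ∫ x in 0..a, f x := by
  have hsub : 2 * a - a = a := by ring
  have hreflect := intervalIntegral.integral_comp_sub_left f (2 * a) (a := 0) (b := a)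
  have hint' := (hint.comp_sub_left (2 * a)).symm
  simp only [hf, sub_zero, hsub] at hreflect hint'
  rw [← intervalIntegral.integral_add_adjacent_intervals hint hint', ← hreflect, two_smul]

namespace Complex

theorem log_ne_zero_of_ne {w : ℂ} (h₀ : w ≠ 0) (h₁ : w ≠ 1) : log w ≠ 0 :=
  fun h => h₁ (by rw [← exp_log h₀, h, exp_zero])

/-- The value at `0` is the junk value `(log 0)⁻¹ = 0`, which is also the limit since
`‖log w‖ ≥ |Real.log ‖w‖| → ∞`. -/
theorem continuousAt_inv_log_zero : ContinuousAt (fun w : ℂ => (log w)⁻¹) 0 := by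
  rw [← continuousWithinAt_compl_self, ContinuousWithinAt, log_zero, inv_zero,
    tendsto_zero_iff_norm_tendsto_zero]
  have hre : Tendsto (fun w : ℂ => (log w).re) (𝓝[≠] 0) atBot := by
    simpa only [log_re, Function.comp_def] using
      Real.tendsto_log_nhdsGT_zero.comp tendsto_norm_nhdsNE_zero
  have hnorm : Tendsto (fun w : ℂ => ‖log w‖) (𝓝[≠] 0) atTop :=
    tendsto_atTop_mono (fun w => abs_re_le_norm _) (tendsto_abs_atBot_atTop.comp hre)
  simpa only [norm_inv, Function.comp_def] using tendsto_inv_atTop_zero.comp hnorm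

theorem continuousAt_inv_log {w : ℂ} (hw : w ∈ slitPlane ∨ w = 0) (h₁ : w ≠ 1) :
    ContinuousAt (fun w : ℂ => (log w)⁻¹) w := by
  rcases hw with hw | rfl
  · exact (continuousAt_clog hw).inv₀ (log_ne_zero_of_ne (slitPlane_ne_zero hw) h₁)
  · exact continuousAt_inv_log_zero

theorem tendsto_log_one_add_div_self :
    Tendsto (fun z : ℂ => log (1 + z) / z) (𝓝[≠] 0) (𝓝 1) := by
  have hderiv : HasDerivAt (fun z : ℂ => log (1 + z)) 1 0 := by
    simpa using (hasDerivAt_log (by simp : (1 + 0 : ℂ) ∈ slitPlane)).comp_const_add 1 0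
  refine (hasDerivAt_iff_tendsto_slope.mp hderiv).congr fun z => ?_
  simp [slope_def_field]

theorem tendsto_sub_log_one_add_div_sq :
    Tendsto (fun z : ℂ => (z - log (1 + z)) / z ^ 2) (𝓝[≠] 0) (𝓝 (1 / 2)) := by
  have hrem : Tendsto (fun z : ℂ => (log (1 + z) - logTaylor 3 z) / z ^ 2) (𝓝[≠] 0) (𝓝 0) :=
    ((log_sub_logTaylor_isBigO 2).trans_isLittleO
      (Asymptotics.isLittleO_pow_pow (by norm_num : 2 < 3))).tendsto_div_nhds_zero.mono_left
      nhdsWithin_le_nhds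
  have htaylor (z : ℂ) : logTaylor 3 z = z - z ^ 2 / 2 := by
    norm_num [logTaylor, Finset.sum_range_succ, sub_eq_add_neg, neg_div]
  refine (sub_zero (1 / 2 : ℂ) ▸ hrem.const_sub (1 / 2 : ℂ)).congr' ?_
  filter_upwards [self_mem_nhdsWithin] with z (hz : z ≠ 0)
  rw [htaylor]
  field_simp
  ring

theorem tendsto_inv_log_one_add_sub_inv :
    Tendsto (fun z : ℂ => (log (1 + z))⁻¹ - z⁻¹) (𝓝[≠] 0) (𝓝 (1 / 2)) := by
  have hquot := tendsto_sub_log_one_add_div_sq.div tendsto_log_one_add_div_self one_ne_zero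
  rw [div_one] at hquot
  refine hquot.congr' ?_
  filter_upwards [self_mem_nhdsWithin, tendsto_log_one_add_div_self.eventually_ne one_ne_zero]
    with z (hz : z ≠ 0) hlog
  have : log (1 + z) ≠ 0 := by simpa [hz] using hlog
  simp only [Pi.div_apply]
  field_simp

theorem one_add_mem_slitPlane_or_eq_zero {z : ℂ} (hz : ‖z‖ ≤ 1) :
    1 + z ∈ slitPlane ∨ 1 + z = 0 := by
  rw [or_iff_not_imp_right, mem_slitPlane_iff_not_le_zero]
  intro hne hle
  obtain ⟨hre, him⟩ := le_def.mp hle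
  simp only [add_re, one_re, zero_re, add_im, one_im, zero_im, zero_add] at hre him
  have hnorm : |z.re| = ‖z‖ := abs_re_eq_norm.mpr him
  have hre' : z.re = -1 := by linarith [abs_of_neg (by linarith : z.re < 0)]
  exact hne (ext (by simp [hre']) (by simp [him]))

noncomputable def invLogOneAddSubInv : ℂ → ℂ :=
  Function.update (fun z => (log (1 + z))⁻¹ - z⁻¹) 0 (1 / 2)

theorem invLogOneAddSubInv_of_ne_zero {z : ℂ} (hz : z ≠ 0) :
    invLogOneAddSubInv z = (log (1 + z))⁻¹ - z⁻¹ :=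
  Function.update_of_ne hz _ _

theorem invLogOneAddSubInv_eventuallyEq {z : ℂ} (hz : z ≠ 0) :
    invLogOneAddSubInv =ᶠ[𝓝 z] fun z => (log (1 + z))⁻¹ - z⁻¹ := by
  filter_upwards [isOpen_ne.mem_nhds hz] with w hw using invLogOneAddSubInv_of_ne_zero hw

theorem continuousAt_invLogOneAddSubInv {z : ℂ} (hz : ‖z‖ ≤ 1) :
    ContinuousAt invLogOneAddSubInv z := by
  rcases eq_or_ne z 0 with rfl | hz₀
  · exact continuousAt_update_same.mpr tendsto_inv_log_one_add_sub_inv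
  refine ContinuousAt.congr (.sub ?_ (continuousAt_inv₀ hz₀))
    (invLogOneAddSubInv_eventuallyEq hz₀).symm
  exact (continuousAt_inv_log (one_add_mem_slitPlane_or_eq_zero hz) (by simpa using hz₀)).comp
    (continuousAt_const.add continuousAt_id)

theorem differentiableAt_invLogOneAddSubInv {z : ℂ} (hz : ‖z‖ < 1) (hz₀ : z ≠ 0) :
    DifferentiableAt ℂ invLogOneAddSubInv z := by
  have hslit : 1 + z ∈ slitPlane := mem_slitPlane_of_norm_lt_one hz
  refine DifferentiableAt.congr_of_eventuallyEq ?_ (invLogOneAddSubInv_eventuallyEq hz₀)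
  refine .sub (.inv ?_ ?_) (differentiableAt_inv hz₀)
  · exact (differentiableAt_log hslit).comp z ((differentiableAt_const _).add differentiableAt_id)
  · exact log_ne_zero_of_ne (slitPlane_ne_zero hslit) (by simpa using hz₀)

theorem circleAverage_invLogOneAddSubInv : circleAverage invLogOneAddSubInv 0 1 = 1 / 2 := by
  rw [circleAverage_of_differentiable_on_off_countable (countable_singleton 0)]
  · simp [invLogOneAddSubInv]
  · exact fun z hz => (continuousAt_invLogOneAddSubInv (by simpa using hz)).continuousWithinAt
  · rintro z ⟨hz, hz₀⟩
    exact differentiableAt_invLogOneAddSubInv (by simpa using hz) hz₀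

theorem circleAverage_inv_log_one_add :
    circleAverage (fun z => (log (1 + z))⁻¹) 0 1 = 1 / 2 := by
  have hsphere :
      EqOn (fun z => (log (1 + z))⁻¹) (invLogOneAddSubInv + (·⁻¹)) (sphere 0 |1|) := by
    intro z hz
    have hz₀ : z ≠ 0 := by rintro rfl; simp at hz
    simp [invLogOneAddSubInv_of_ne_zero hz₀]
  have hint : CircleIntegrable invLogOneAddSubInv 0 1 :=
    ContinuousOn.circleIntegrable zero_le_one fun z hz =>
      (continuousAt_invLogOneAddSubInv (by simp_all)).continuousWithinAt
  have hint_inv : CircleIntegrable (·⁻¹ : ℂ → ℂ) 0 1 :=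
    ContinuousOn.circleIntegrable zero_le_one <| continuousOn_inv₀.mono fun z hz => by
      rintro rfl; simp at hz
  have hinv : circleAverage (·⁻¹) 0 1 = (0 : ℂ) := by
    simpa using circleAverage_zero_one_congr_inv (f := fun z : ℂ => z) |>.trans
      differentiable_id.diffContOnCl.circleAverage
  rw [circleAverage_congr_sphere hsphere, circleAverage_add hint hint_inv,
    circleAverage_invLogOneAddSubInv, hinv, add_zero]

theorem continuous_inv_log_one_add_circleMap :
    Continuous fun θ : ℝ => (log (1 + circleMap 0 1 θ))⁻¹ := by
  refine continuous_iff_continuousAt.mpr fun θ => ?_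
  refine ContinuousAt.comp (g := fun w : ℂ => (log w)⁻¹) ?_ (by fun_prop)
  refine continuousAt_inv_log (one_add_mem_slitPlane_or_eq_zero (by simp)) ?_
  simp [circleMap_ne_center one_ne_zero]

theorem integral_re_inv_log_one_add_circleMap :
    ∫ θ in 0..2 * π, ((log (1 + circleMap 0 1 θ))⁻¹).re = π := by
  have hint : CircleIntegrable (fun z => (log (1 + z))⁻¹) 0 1 :=
    continuous_inv_log_one_add_circleMap.intervalIntegrable _ _
  have h := reCLM.circleAverage_comp_comm hint
  rw [circleAverage_inv_log_one_add, circleAverage_def] at h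
  simp only [Function.comp_apply, reCLM_apply, smul_eq_mul] at h
  rw [show (1 / 2 : ℂ).re = 1 / 2 by norm_num] at h
  field_simp at h
  simpa only [one_div] using h

theorem re_inv_log_conj (w : ℂ) : ((log (conj w))⁻¹).re = ((log w)⁻¹).re := by
  rw [log_conj_eq_ite]
  split_ifs
  · rfl
  · rw [← map_inv₀, conj_re]

theorem re_inv_log_one_add_circleMap_two_pi_sub (θ : ℝ) :
    ((log (1 + circleMap 0 1 (2 * π - θ)))⁻¹).re = ((log (1 + circleMap 0 1 θ))⁻¹).re := by
  rw [sub_eq_neg_add, periodic_circleMap, ← conj_circleMap_zero,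
    show 1 + conj (circleMap 0 1 θ) = conj (1 + circleMap 0 1 θ) by simp, re_inv_log_conj]

theorem log_one_add_exp_two_mul_I {x : ℝ} (hx : x ∈ Ioo (-(π / 2)) (π / 2)) :
    log (1 + exp (2 * x * I)) = Real.log (2 * Real.cos x) + x * I := by
  have hcos : 0 < Real.cos x := Real.cos_pos_of_mem_Ioo hx
  have hexp : 1 + exp (2 * x * I) = exp (Real.log (2 * Real.cos x) + x * I) := by
    have hinv : exp (-x * I) * exp (x * I) = 1 := by rw [← exp_add]; ring_nf; exact exp_zero
    have hsq : exp (2 * x * I) = exp (x * I) * exp (x * I) := by rw [← exp_add]; ring_nf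
    rw [exp_add, ← ofReal_exp, Real.exp_log (by positivity), ofReal_mul, ofReal_cos, cos, hsq]
    push_cast
    linear_combination -hinv
  rw [hexp, log_exp] <;> simp <;> linarith [hx.1, hx.2, Real.pi_pos]

theorem re_inv_log_one_add_circleMap_two_mul {x : ℝ} (hx : x ∈ Icc (-(π / 2)) (π / 2)) :
    ((log (1 + circleMap 0 1 (2 * x)))⁻¹).re =
      Real.log (2 * Real.cos x) / (x ^ 2 + Real.log (2 * Real.cos x) ^ 2) := by
  rcases eq_or_ne |x| (π / 2) with hend | hint
  · -- both sides are `0`, through the junk values `log 0 = 0` and `0⁻¹ = 0`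
    have hcos : Real.cos x = 0 := by rw [← Real.cos_abs, hend, Real.cos_pi_div_two]
    have hzero : 1 + circleMap 0 1 (2 * x) = 0 := by
      apply Complex.ext <;>
        simp [circleMap_zero_re, circleMap_zero_im, Real.cos_two_mul, Real.sin_two_mul, hcos]
    simp [hzero, hcos]
  · have hx' : x ∈ Ioo (-(π / 2)) (π / 2) := abs_lt.mp ((abs_le.mpr hx).lt_of_ne hint)
    rw [circleMap_zero, ofReal_one, one_mul, ofReal_mul, ofReal_ofNat,
      log_one_add_exp_two_mul_I hx', inv_re, normSq_add_mul_I]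
    simp [add_comm]

end Complex

/-- `∫_0^{π/2} ln(2 cos x) / (x² + ln²(2 cos x)) dx = π/4`. -/
theorem integral_log_two_cos_div :
    ∫ x in (0:ℝ)..(π/2),
        Real.log (2 * Real.cos x) / (x ^ 2 + Real.log (2 * Real.cos x) ^ 2)
    = π / 4 := by
  set g : ℝ → ℝ := fun θ => ((log (1 + circleMap 0 1 θ))⁻¹).re
  have hg : Continuous g := continuous_re.comp continuous_inv_log_one_add_circleMap
  calc _ = ∫ x in (0:ℝ)..(π/2), g (2 * x) := by
        refine intervalIntegral.integral_congr fun x hx => ?_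
        rw [uIcc_of_le (by positivity)] at hx
        exact (re_inv_log_one_add_circleMap_two_mul ⟨by linarith [hx.1, pi_pos], hx.2⟩).symm
    _ = 2⁻¹ * ∫ θ in 0..π, g θ := by
        simp [intervalIntegral.integral_comp_mul_left g two_ne_zero, mul_div_cancel₀]
    _ = 4⁻¹ * ∫ θ in 0..2 * π, g θ := by
        rw [intervalIntegral.integral_zero_two_mul_of_symm re_inv_log_one_add_circleMap_two_pi_sub
          (hg.intervalIntegrable _ _)]
        ring
    _ = π / 4 := by
        rw [integral_re_inv_log_one_add_circleMap]
        ring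
end

section
/- ∫_0^{π/2} ln(cos x) / (x² + ln²(cos x)) dx = (π/2) · (1 − 1/ln 2). -/
/-!
Put `k w = (log w)⁻¹ - (w - 1)⁻¹`. The singularity of `k` at `w = 1` is removable, and
`(log w)⁻¹ → 0` as `w → 0`, so `k` is holomorphic on the disc `|w - 1/2| < 1/2` and continuous on
its closure. By the mean value property its average over the boundary circle is
`k (1/2) = 2 - 1 / log 2`. On that circle `w = (1 + e^{iθ}) / 2 = cos (θ/2) e^{iθ/2}`, so for
`|θ| < π` we get `log w = log cos (θ/2) + i θ/2` and `Re (1 / log w)` is the integrand at `θ/2`,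
while `Re (1 / (w - 1)) = -1`. As the integrand is even, the average of `Re k` is
`(4 J + 2π) / (2π)` with `J` the integral sought.
-/

open Real Set Metric Filter MeasureTheory
open scoped Topology Interval

theorem Complex.deriv_log_one : deriv Complex.log 1 = 1 := by
  simpa using (Complex.hasDerivAt_log Complex.one_mem_slitPlane).deriv

theorem Complex.dslope_log_one_ne_zero {w : ℂ} (hw : w ∈ Complex.slitPlane) :
    dslope Complex.log 1 w ≠ 0 := by
  rcases eq_or_ne w 1 with rfl | hw1
  · simp [dslope_same, Complex.deriv_log_one]
  · rw [dslope_of_ne _ hw1, slope_def_field, Complex.log_one, sub_zero]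
    refine div_ne_zero (fun h => hw1 ?_) (sub_ne_zero.2 hw1)
    rw [← Complex.exp_log (Complex.slitPlane_ne_zero hw), h, Complex.exp_zero]

theorem Complex.continuousAt_inv_log_zero_s16 :
    ContinuousAt (fun w : ℂ => (Complex.log w)⁻¹) 0 := by
  have hlog : Tendsto (fun w : ℂ => ‖Complex.log w‖) (𝓝[≠] 0) atTop := by
    have h := Real.tendsto_log_nhdsGT_zero.comp (tendsto_norm_nhdsNE_zero (E := ℂ))
    refine tendsto_atTop_mono (fun w => ?_) (tendsto_neg_atBot_atTop.comp h)
    simpa [Complex.log_re] using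
      (neg_le_abs (Complex.log w).re).trans (Complex.abs_re_le_norm _)
  have hpunct : ContinuousWithinAt (fun w : ℂ => (Complex.log w)⁻¹) {0}ᶜ 0 := by
    rw [ContinuousWithinAt, Complex.log_zero, inv_zero, tendsto_zero_iff_norm_tendsto_zero]
    simp only [norm_inv]
    exact tendsto_inv_atTop_zero.comp hlog
  exact continuousWithinAt_compl_self.1 hpunct

theorem Complex.re_pos_of_mem_closedBall_half {w : ℂ} (hw : w ∈ closedBall (1/2 : ℂ) (1/2))
    (hw0 : w ≠ 0) : 0 < w.re := by
  rw [mem_closedBall, Complex.dist_eq] at hw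
  have hsq : ‖w - 1/2‖ ^ 2 ≤ (1/2) ^ 2 := pow_le_pow_left₀ (norm_nonneg _) hw 2
  have hpos : 0 < Complex.normSq w := Complex.normSq_pos.2 hw0
  rw [Complex.sq_norm, Complex.normSq_apply] at hsq
  rw [Complex.normSq_apply] at hpos
  simp only [Complex.sub_re, Complex.sub_im, Complex.div_ofNat_re, Complex.div_ofNat_im,
    Complex.one_re, Complex.one_im, zero_div, sub_zero] at hsq
  nlinarith

theorem Complex.re_inv_sub_one_of_mem_sphere_half {w : ℂ} (hw : w ∈ sphere (1/2 : ℂ) (1/2))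
    (hw1 : w ≠ 1) : ((w - 1)⁻¹).re = -1 := by
  rw [mem_sphere, Complex.dist_eq] at hw
  have hsq : ‖w - 1/2‖ ^ 2 = (1/2) ^ 2 := by rw [hw]
  rw [Complex.sq_norm, Complex.normSq_apply] at hsq
  simp only [Complex.sub_re, Complex.sub_im, Complex.div_ofNat_re, Complex.div_ofNat_im,
    Complex.one_re, Complex.one_im, zero_div, sub_zero] at hsq
  have hre : w.re ≠ 1 := by
    intro h
    rw [h] at hsq
    exact hw1 (Complex.ext (by simpa using h) (by simpa using mul_self_eq_zero.1 (by linarith)))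
  have hpos : 0 < (w.re - 1) * (w.re - 1) := mul_self_pos.2 (sub_ne_zero.2 hre)
  rw [Complex.inv_re, Complex.normSq_apply]
  simp only [Complex.sub_re, Complex.one_re, Complex.sub_im, Complex.one_im, sub_zero]
  rw [div_eq_iff (by nlinarith [mul_self_nonneg w.im])]
  nlinarith

theorem intervalIntegral.integral_symm_eq_two_smul_of_even {E : Type*} [NormedAddCommGroup E]
    [NormedSpace ℝ E] {f : ℝ → E} {a : ℝ} (hf : f.Even)
    (hfi : IntervalIntegrable f volume (-a) a) :
    ∫ x in -a..a, f x = 2 • ∫ x in 0..a, f x := by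
  have hzero : (0 : ℝ) ∈ uIcc (-a) a := by
    rcases le_total 0 a with ha | ha
    · exact mem_uIcc.2 (Or.inl ⟨by linarith, ha⟩)
    · exact mem_uIcc.2 (Or.inr ⟨ha, by linarith⟩)
  have hleft : IntervalIntegrable f volume (-a) 0 :=
    hfi.mono_set (uIcc_subset_uIcc left_mem_uIcc hzero)
  have hright : IntervalIntegrable f volume 0 a :=
    hfi.mono_set (uIcc_subset_uIcc hzero right_mem_uIcc)
  have hneg : ∫ x in -a..0, f x = ∫ x in 0..a, f x := by
    rw [← intervalIntegral.integral_congr (a := 0) (b := a) fun x _ => hf x,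
      intervalIntegral.integral_comp_neg, neg_zero]
  rw [← intervalIntegral.integral_add_adjacent_intervals hleft hright, hneg, two_smul]

-- Written as an iterated `dslope` so that the removable singularity at `w = 1` is filled in.
noncomputable def invLogSubInvSubOne : ℂ → ℂ :=
  dslope (fun w => (dslope Complex.log 1 w)⁻¹) 1

theorem invLogSubInvSubOne_of_ne_one {w : ℂ} (hw : w ≠ 1) :
    invLogSubInvSubOne w = (Complex.log w)⁻¹ - (w - 1)⁻¹ := by
  have hw' : w - 1 ≠ 0 := sub_ne_zero.2 hw
  rw [invLogSubInvSubOne, dslope_of_ne _ hw, slope_def_field, dslope_of_ne _ hw, slope_def_field,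
    dslope_same, Complex.deriv_log_one, Complex.log_one, sub_zero, inv_one, inv_div]
  field_simp

theorem differentiableOn_invLogSubInvSubOne :
    DifferentiableOn ℂ invLogSubInvSubOne Complex.slitPlane := by
  have hnhds := Complex.isOpen_slitPlane.mem_nhds Complex.one_mem_slitPlane
  refine (Complex.differentiableOn_dslope hnhds).2 (DifferentiableOn.inv ?_
    fun w hw => Complex.dslope_log_one_ne_zero hw)
  exact (Complex.differentiableOn_dslope hnhds).2
    fun w hw => (Complex.differentiableAt_log hw).differentiableWithinAt

theorem continuousAt_invLogSubInvSubOne_zero : ContinuousAt invLogSubInvSubOne 0 := by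
  have heq : (fun w : ℂ => (Complex.log w)⁻¹ - (w - 1)⁻¹) =ᶠ[𝓝 0] invLogSubInvSubOne := by
    filter_upwards [isOpen_ne.mem_nhds (zero_ne_one : (0 : ℂ) ≠ 1)] with w hw
    exact (invLogSubInvSubOne_of_ne_one hw).symm
  refine ContinuousAt.congr ?_ heq
  exact Complex.continuousAt_inv_log_zero_s16.sub
    ((continuousAt_id.sub continuousAt_const).inv₀ (by norm_num))

theorem continuousOn_invLogSubInvSubOne :
    ContinuousOn invLogSubInvSubOne (closedBall (1/2) (1/2)) := by
  intro w hw
  rcases eq_or_ne w 0 with rfl | hw0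
  · exact continuousAt_invLogSubInvSubOne_zero.continuousWithinAt
  · have hslit : w ∈ Complex.slitPlane := Or.inl (Complex.re_pos_of_mem_closedBall_half hw hw0)
    exact (differentiableOn_invLogSubInvSubOne.differentiableAt
      (Complex.isOpen_slitPlane.mem_nhds hslit)).continuousAt.continuousWithinAt

theorem circleAverage_invLogSubInvSubOne :
    circleAverage invLogSubInvSubOne (1/2) (1/2) = ((2 - (Real.log 2)⁻¹ : ℝ) : ℂ) := by
  have hdiff : DiffContOnCl ℂ invLogSubInvSubOne (ball (1/2) |1/2|) := by
    rw [abs_of_pos (by norm_num : (0 : ℝ) < 1/2)]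
    refine ⟨differentiableOn_invLogSubInvSubOne.mono fun w hw => Or.inl ?_, ?_⟩
    · refine Complex.re_pos_of_mem_closedBall_half (ball_subset_closedBall hw) ?_
      rintro rfl
      simp at hw
    · rw [closure_ball _ (by norm_num)]
      exact continuousOn_invLogSubInvSubOne
  have hlog : Complex.log (1/2) = ((-Real.log 2 : ℝ) : ℂ) := by
    rw [← Real.log_inv, Complex.ofReal_log (by norm_num)]
    norm_num
  rw [hdiff.circleAverage, invLogSubInvSubOne_of_ne_one (by norm_num), hlog]
  push_cast
  ring

theorem circleAverage_re_invLogSubInvSubOne :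
    circleAverage (Complex.re ∘ invLogSubInvSubOne) (1/2) (1/2) = 2 - (Real.log 2)⁻¹ := by
  have hint : CircleIntegrable invLogSubInvSubOne (1/2) (1/2) :=
    (continuousOn_invLogSubInvSubOne.mono sphere_subset_closedBall).circleIntegrable (by norm_num)
  rw [show Complex.re ∘ invLogSubInvSubOne = Complex.reCLM ∘ invLogSubInvSubOne from rfl,
    Complex.reCLM.circleAverage_comp_comm hint, circleAverage_invLogSubInvSubOne]
  exact Complex.ofReal_re _

noncomputable def logCosRatio (x : ℝ) : ℝ :=
  Real.log (Real.cos x) / (x ^ 2 + Real.log (Real.cos x) ^ 2)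

theorem circleMap_half_half (θ : ℝ) :
    circleMap (1/2) (1/2) θ = Real.cos (θ/2) * Complex.exp ((θ/2 : ℝ) * Complex.I) := by
  have hθ : (θ : ℂ) = 2 * ((θ/2 : ℝ) : ℂ) := by push_cast; ring
  rw [circleMap, hθ, Complex.exp_mul_I, Complex.exp_mul_I, Complex.cos_two_mul,
    Complex.sin_two_mul, Complex.ofReal_cos]
  push_cast
  ring

theorem log_circleMap_half_half {θ : ℝ} (hθ : θ ∈ Ioo (-π) π) :
    Complex.log (circleMap (1/2) (1/2) θ)
      = Real.log (Real.cos (θ/2)) + (θ/2 : ℝ) * Complex.I := by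
  have hcos : 0 < Real.cos (θ/2) :=
    Real.cos_pos_of_mem_Ioo ⟨by linarith [hθ.1], by linarith [hθ.2]⟩
  rw [circleMap_half_half, Complex.log_ofReal_mul hcos (Complex.exp_ne_zero _),
    Complex.log_exp (by rw [Complex.mul_I_im, Complex.ofReal_re]; linarith [hθ.1, pi_pos])
      (by rw [Complex.mul_I_im, Complex.ofReal_re]; linarith [hθ.2, pi_pos])]

theorem re_invLogSubInvSubOne_circleMap {θ : ℝ} (hθ : θ ∈ Ioo (-π) π) (hθ0 : θ ≠ 0) :
    (invLogSubInvSubOne (circleMap (1/2) (1/2) θ)).re = logCosRatio (θ/2) + 1 := by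
  have hlog := log_circleMap_half_half hθ
  have hw1 : circleMap (1/2) (1/2) θ ≠ 1 := by
    intro h
    rw [h, Complex.log_one] at hlog
    have him := congrArg Complex.im hlog
    rw [Complex.zero_im, Complex.add_im, Complex.ofReal_im, Complex.mul_I_im,
      Complex.ofReal_re, zero_add] at him
    exact hθ0 (by linarith)
  rw [invLogSubInvSubOne_of_ne_one hw1, Complex.sub_re,
    Complex.re_inv_sub_one_of_mem_sphere_half (circleMap_mem_sphere _ (by norm_num) _) hw1, hlog,
    Complex.inv_re, Complex.normSq_add_mul_I, Complex.add_re, Complex.ofReal_re,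
    Complex.mul_I_re, Complex.ofReal_im, neg_zero, add_zero, logCosRatio]
  ring

theorem continuous_re_invLogSubInvSubOne_circleMap :
    Continuous fun θ => (invLogSubInvSubOne (circleMap (1/2) (1/2) θ)).re :=
  Complex.continuous_re.comp <|
    continuousOn_invLogSubInvSubOne.comp_continuous (continuous_circleMap _ _)
      fun θ => sphere_subset_closedBall (circleMap_mem_sphere _ (by norm_num) θ)

theorem intervalIntegrable_logCosRatio :
    IntervalIntegrable logCosRatio volume (-(π/2)) (π/2) := by
  have hcont : Continuous fun x => (invLogSubInvSubOne (circleMap (1/2) (1/2) (2 * x))).re - 1 :=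
    (continuous_re_invLogSubInvSubOne_circleMap.comp (continuous_const_mul 2)).sub
      continuous_const
  refine (hcont.intervalIntegrable _ _).congr_ae ((ae_restrict_iff' measurableSet_uIoc).2 ?_)
  filter_upwards [Measure.ae_ne volume 0, Measure.ae_ne volume (π/2)] with x hx0 hxπ hx
  rw [uIoc_of_le (by linarith [pi_pos])] at hx
  rw [re_invLogSubInvSubOne_circleMap
    ⟨by linarith [hx.1], by linarith [lt_of_le_of_ne hx.2 hxπ]⟩ (by simpa using hx0)]
  simp

theorem integral_re_invLogSubInvSubOne_circleMap :
    ∫ θ in -π..π, (invLogSubInvSubOne (circleMap (1/2) (1/2) θ)).re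
      = 4 * (∫ x in 0..π/2, logCosRatio x) + 2 * π := by
  have hae : ∀ᵐ θ ∂volume, θ ∈ Ι (-π) π →
      (invLogSubInvSubOne (circleMap (1/2) (1/2) θ)).re = logCosRatio (θ/2) + 1 := by
    filter_upwards [Measure.ae_ne volume 0, Measure.ae_ne volume π] with θ hθ0 hθπ hθ
    rw [uIoc_of_le (by linarith [pi_pos])] at hθ
    exact re_invLogSubInvSubOne_circleMap ⟨hθ.1, lt_of_le_of_ne hθ.2 hθπ⟩ hθ0
  have heven : logCosRatio.Even := fun x => by simp [logCosRatio]
  rw [intervalIntegral.integral_congr_ae hae,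
    intervalIntegral.integral_comp_div (fun x => logCosRatio x + 1) two_ne_zero, neg_div,
    intervalIntegral.integral_add intervalIntegrable_logCosRatio intervalIntegrable_const,
    intervalIntegral.integral_symm_eq_two_smul_of_even heven intervalIntegrable_logCosRatio]
  simp only [nsmul_eq_mul, Nat.cast_ofNat, intervalIntegral.integral_const, sub_neg_eq_add,
    add_halves, smul_eq_mul, mul_one]
  ring

/-- `∫_0^{π/2} ln(cos x)/(x² + ln²(cos x)) dx = (π/2)(1 − 1/ln 2)`. -/
theorem integral_log_cos_div :
    ∫ x in (0:ℝ)..(π/2),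
        Real.log (Real.cos x) / (x ^ 2 + Real.log (Real.cos x) ^ 2)
    = (π / 2) * (1 - 1 / Real.log 2) := by
  have hper : Function.Periodic
      (fun θ => (invLogSubInvSubOne (circleMap (1/2) (1/2) θ)).re) (2 * π) :=
    fun θ => by simp only [periodic_circleMap _ _ θ]
  have hshift := hper.intervalIntegral_add_eq 0 (-π)
  rw [zero_add, show -π + 2 * π = π by ring, integral_re_invLogSubInvSubOne_circleMap] at hshift
  have hmean := circleAverage_re_invLogSubInvSubOne
  rw [circleAverage_def, Function.comp_def, hshift, smul_eq_mul,
    inv_mul_eq_iff_eq_mul₀ (by positivity)] at hmean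
  change ∫ x in (0:ℝ)..(π/2), logCosRatio x = _
  rw [one_div]
  linear_combination hmean / 4
end

section
/- ∫_0^{π/2} x · sin(2x) / (x² + ln²(2 cos x)) dx = 13π/48. -/
/-!
For `|x| < π/2` and `w = e^{2ix}` one has `log (1 + w) = log (2 cos x) + i x`, so the integrand is
`-sin 2x · Im (1 / log (1 + w))`. Subtract from `1 / log (1 + w)` the beginning
`1/w + 1/2 - w/12` of its Laurent expansion at `0`. The remainder `R` is `O(w²)`, so
`(w - w⁻¹) R(w)` is continuous on the closed unit disc (also at `w = -1`, where `1 / log (1 + w)`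
tends to `0`) and holomorphic off `0`; by the mean value property its average over the unit circle
is its value `0` at the centre. Taking real parts, `sin θ · Im R(e^{iθ})` integrates to `0` over
`[-π, π]`, so only the explicit terms contribute: the integrand is
`13/12 sin² 2x - sin 2x · Im R(e^{2ix})`, whose integral over `[-π/2, π/2]` is `13π/24`, and the
integrand is even.
-/

open Complex Filter Topology Asymptotics Metric
open scoped Real

theorem Complex.tendsto_inv_log_nhds_zero : Tendsto (fun z : ℂ => (log z)⁻¹) (𝓝 0) (𝓝 0) := by
  have hlog : Tendsto log (𝓝[≠] 0) (Bornology.cobounded ℂ) := by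
    rw [← tendsto_norm_atTop_iff_cobounded]
    refine tendsto_atTop_mono (fun z => ?_) (tendsto_abs_atBot_atTop.comp
      (Real.tendsto_log_nhdsGT_zero.comp tendsto_norm_nhdsNE_zero))
    rw [Function.comp_apply, Function.comp_apply, ← log_re]
    exact abs_re_le_norm _
  refine (tendsto_sup.2 ⟨tendsto_inv₀_cobounded.comp hlog, ?_⟩).mono_left (nhdsNE_sup_pure 0).ge
  exact tendsto_pure_left.2 fun s hs => by simpa using mem_of_mem_nhds hs

theorem Complex.log_one_add_ne_zero {z : ℂ} (hz : z ≠ 0) (h : 1 + z ∈ slitPlane) :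
    log (1 + z) ≠ 0 := by
  intro hL
  have := exp_log (slitPlane_ne_zero h)
  rw [hL, exp_zero] at this
  exact hz (by linear_combination -this)

theorem Complex.one_add_mem_slitPlane_of_norm_le_one {z : ℂ} (hz : ‖z‖ ≤ 1) (h : z ≠ -1) :
    1 + z ∈ slitPlane := by
  rw [mem_slitPlane_iff]
  by_contra! H
  have hre := (abs_le.1 ((abs_re_le_norm z).trans hz)).1
  exact h (Complex.ext (by simp only [add_re, one_re, neg_re] at H ⊢; linarith) (by simpa using H.2))

theorem Complex.isEquivalent_log_one_add : (fun z : ℂ => log (1 + z)) ~[𝓝 0] id :=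
  log_sub_self_isBigO.trans_isLittleO (isLittleO_pow_id one_lt_two)

theorem Complex.isBigO_sub_log_one_add_mul :
    (fun z : ℂ => z - log (1 + z) * (1 + z / 2 - z ^ 2 / 12)) =O[𝓝 0] fun z => z ^ 4 := by
  have hT : ∀ z : ℂ, logTaylor 4 z = z - z ^ 2 / 2 + z ^ 3 / 3 := fun z => by
    norm_num [logTaylor, Finset.sum_range_succ, sub_eq_add_neg, neg_div]
  have hP : (fun z : ℂ => 1 + z / 2 - z ^ 2 / 12) =O[𝓝 0] fun _ => (1 : ℂ) :=
    (Continuous.tendsto (by fun_prop) 0).isBigO_one ℂ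
  have hQ : (fun z : ℂ => 5 / 24 - z / 36) =O[𝓝 0] fun _ => (1 : ℂ) :=
    (Continuous.tendsto (by fun_prop) 0).isBigO_one ℂ
  -- with `T = logTaylor 4`: `z - T z * (1 + z/2 - z²/12) = -z⁴ (5/24 - z/36)`
  have h := (((log_sub_logTaylor_isBigO 3).mul hP).add
    ((isBigO_refl (fun z : ℂ => z ^ 4) _).mul hQ)).neg_left
  simp only [mul_one] at h
  refine h.congr_left fun z => ?_
  rw [hT]
  ring

noncomputable def invLogOneAddRemainder (w : ℂ) : ℂ := (log (1 + w))⁻¹ - w⁻¹ - 1 / 2 + w / 12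

lemma invLogOneAddRemainder_eq_div {z : ℂ} (hz : z ≠ 0) (hL : log (1 + z) ≠ 0) :
    invLogOneAddRemainder z
      = (z - log (1 + z) * (1 + z / 2 - z ^ 2 / 12)) / (z * log (1 + z)) := by
  rw [invLogOneAddRemainder]
  field_simp
  ring

lemma invLogOneAddRemainder_isBigO : invLogOneAddRemainder =O[𝓝[≠] 0] fun z => z ^ 2 := by
  have hlow : id =O[𝓝[≠] 0] fun z : ℂ => log (1 + z) :=
    isEquivalent_log_one_add.isBigO_symm.mono nhdsWithin_le_nhds
  have hden : (fun z : ℂ => (z * log (1 + z))⁻¹) =O[𝓝[≠] 0] fun z => (z * z)⁻¹ :=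
    ((isBigO_refl id _).mul hlow).inv_rev <| Eventually.of_forall fun z h => by simp_all
  have hne : ∀ᶠ z in 𝓝[≠] (0 : ℂ), z ≠ 0 ∧ Complex.log (1 + z) ≠ 0 := by
    filter_upwards [self_mem_nhdsWithin, hlow.eq_zero_imp] with z hz h
    exact ⟨hz, fun h' => hz (h h')⟩
  refine ((isBigO_sub_log_one_add_mul.mono nhdsWithin_le_nhds).mul hden).congr' ?_ ?_
  · filter_upwards [hne] with z hz
    rw [invLogOneAddRemainder_eq_div hz.1 hz.2]
    exact (div_eq_mul_inv _ _).symm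
  · filter_upwards [self_mem_nhdsWithin] with z hz
    field_simp

lemma tendsto_invLogOneAddRemainder_div_self :
    Tendsto (fun z => invLogOneAddRemainder z / z) (𝓝[≠] 0) (𝓝 0) :=
  (invLogOneAddRemainder_isBigO.trans_isLittleO
    ((isLittleO_pow_id one_lt_two).mono nhdsWithin_le_nhds)).tendsto_div_nhds_zero

lemma differentiableAt_invLogOneAddRemainder {z : ℂ} (hz : z ≠ 0) (h : 1 + z ∈ slitPlane) :
    DifferentiableAt ℂ invLogOneAddRemainder z := by
  have hlog : DifferentiableAt ℂ (fun w => log (1 + w)) z :=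
    (differentiableAt_log h).comp z (by fun_prop)
  unfold invLogOneAddRemainder
  exact (((hlog.inv (log_one_add_ne_zero hz h)).sub (differentiableAt_inv hz)).sub
    (differentiableAt_const _)).add (by fun_prop)

lemma continuousAt_invLogOneAddRemainder {z : ℂ} (hz0 : z ≠ 0) (hz : ‖z‖ ≤ 1) :
    ContinuousAt invLogOneAddRemainder z := by
  rcases eq_or_ne z (-1) with rfl | h
  · have hinv : ContinuousAt (fun w : ℂ => (log (1 + w))⁻¹) (-1) := by
      rw [ContinuousAt, show (log (1 + -1 : ℂ))⁻¹ = 0 by simp]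
      exact tendsto_inv_log_nhds_zero.comp
        ((continuous_const_add (1 : ℂ)).tendsto' (-1) 0 (by norm_num))
    unfold invLogOneAddRemainder
    exact ((hinv.sub (continuousAt_inv₀ (by norm_num))).sub continuousAt_const).add (by fun_prop)
  · exact (differentiableAt_invLogOneAddRemainder hz0
      (one_add_mem_slitPlane_of_norm_le_one hz h)).continuousAt

/-- Also true at `z = 0`, where both sides vanish because `0⁻¹ = 0` and `x / 0 = 0`. -/
lemma sub_inv_mul_invLogOneAddRemainder_eq (z : ℂ) :
    (z - z⁻¹) * invLogOneAddRemainder z = (z ^ 2 - 1) * (invLogOneAddRemainder z / z) := by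
  rcases eq_or_ne z 0 with rfl | hz
  · simp
  · field_simp

lemma continuousOn_sub_inv_mul_invLogOneAddRemainder :
    ContinuousOn (fun z => (z - z⁻¹) * invLogOneAddRemainder z) (closedBall 0 1) := by
  intro z hz
  rcases eq_or_ne z 0 with rfl | hz0
  · refine ContinuousAt.continuousWithinAt ?_
    simp_rw [sub_inv_mul_invLogOneAddRemainder_eq]
    refine (continuousAt_id.pow 2 |>.sub continuousAt_const).mul ?_
    refine continuousWithinAt_compl_self.1 ?_
    simpa [ContinuousWithinAt] using tendsto_invLogOneAddRemainder_div_self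
  · exact ((continuousAt_id.sub (continuousAt_inv₀ hz0)).mul
      (continuousAt_invLogOneAddRemainder hz0 (by simpa using hz))).continuousWithinAt

lemma circleAverage_sub_inv_mul_invLogOneAddRemainder :
    Real.circleAverage (fun z => (z - z⁻¹) * invLogOneAddRemainder z) 0 1 = 0 := by
  rw [circleAverage_of_differentiable_on_off_countable (Set.countable_singleton 0)]
  · simp
  · simpa using continuousOn_sub_inv_mul_invLogOneAddRemainder
  · rintro z ⟨hz, hz0 : z ≠ 0⟩
    rw [abs_one, mem_ball_zero_iff] at hz
    exact (differentiableAt_id.sub (differentiableAt_inv hz0)).mul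
      (differentiableAt_invLogOneAddRemainder hz0 (mem_slitPlane_of_norm_lt_one hz))

theorem Complex.exp_mul_I_sub_inv (θ : ℝ) :
    exp (θ * I) - (exp (θ * I))⁻¹ = 2 * Real.sin θ * I := by
  rw [← exp_neg, ← neg_mul, ← ofReal_neg, exp_mul_I, exp_mul_I, ← ofReal_cos, ← ofReal_sin,
    ← ofReal_cos, ← ofReal_sin, Real.cos_neg, Real.sin_neg]
  push_cast
  ring

lemma integral_sin_mul_im_invLogOneAddRemainder :
    ∫ θ in -π..π, Real.sin θ * (invLogOneAddRemainder (exp (θ * I))).im = 0 := by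
  set g := fun z : ℂ => (z - z⁻¹) * invLogOneAddRemainder z
  have hint : CircleIntegrable g 0 1 :=
    (continuousOn_sub_inv_mul_invLogOneAddRemainder.mono
      sphere_subset_closedBall).circleIntegrable zero_le_one
  have h := reCLM.circleAverage_comp_comm hint
  rw [circleAverage_sub_inv_mul_invLogOneAddRemainder, map_zero,
    Real.circleAverage_eq_integral_add (-π),
    intervalIntegral.integral_comp_add_right (fun θ => (reCLM ∘ g) (circleMap 0 1 θ))] at h
  have hre : ∫ θ in -π..π, (g (circleMap 0 1 θ)).re = 0 := by
    simpa [Real.pi_ne_zero, two_mul] using h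
  calc _ = ∫ θ in -π..π, -(1 / 2) * (g (circleMap 0 1 θ)).re :=
        intervalIntegral.integral_congr fun θ _ => by
          simp [g, circleMap, exp_mul_I_sub_inv, sin_ofReal_re, mul_assoc]
    _ = 0 := by rw [intervalIntegral.integral_const_mul, hre, mul_zero]

lemma continuous_sin_mul_im_invLogOneAddRemainder :
    Continuous fun θ : ℝ => Real.sin θ * (invLogOneAddRemainder (exp (θ * I))).im := by
  refine Real.continuous_sin.mul (continuous_im.comp (continuous_iff_continuousAt.2 fun θ => ?_))
  exact (continuousAt_invLogOneAddRemainder (exp_ne_zero _) (norm_exp_ofReal_mul_I θ).le).comp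
    (f := fun θ : ℝ => exp (θ * I)) (by fun_prop)

theorem Complex.one_add_exp_two_mul_I (x : ℝ) :
    1 + exp (2 * x * I) = (2 * Real.cos x : ℝ) * exp (x * I) := by
  push_cast
  rw [two_cos, add_mul, ← exp_add, ← exp_add]
  ring_nf
  rw [exp_zero, add_comm]

theorem Complex.log_one_add_exp_two_mul_I_s18 {x : ℝ} (hx : |x| < π / 2) :
    log (1 + exp (2 * x * I)) = Real.log (2 * Real.cos x) + x * I := by
  obtain ⟨hx₁, hx₂⟩ := abs_lt.1 hx
  have hcos : 0 < 2 * Real.cos x := by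
    have := Real.cos_pos_of_mem_Ioo ⟨hx₁, hx₂⟩
    positivity
  rw [one_add_exp_two_mul_I, log_ofReal_mul hcos (exp_ne_zero _), log_exp] <;>
    simp only [mul_I_im, ofReal_re] <;> linarith [Real.pi_pos]

lemma mul_sin_two_mul_div_eq {x : ℝ} (hx : x ∈ Set.Icc (-(π / 2)) (π / 2)) :
    x * Real.sin (2 * x) / (x ^ 2 + Real.log (2 * Real.cos x) ^ 2)
      = 13 / 12 * Real.sin (2 * x) ^ 2
        - Real.sin (2 * x) * (invLogOneAddRemainder (exp (↑(2 * x) * I))).im := by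
  rcases (abs_le.2 hx).lt_or_eq with hlt | hend
  · have hw : (exp (↑(2 * x) * I)).im = Real.sin (2 * x) := exp_ofReal_mul_I_im _
    have hw_inv : (exp (↑(2 * x) * I))⁻¹.im = -Real.sin (2 * x) := by
      rw [← exp_neg, ← neg_mul, ← ofReal_neg, exp_ofReal_mul_I_im, Real.sin_neg]
    have hlog : (log (1 + exp (↑(2 * x) * I)))⁻¹.im
        = -x / (Real.log (2 * Real.cos x) ^ 2 + x ^ 2) := by
      rw [ofReal_mul, ofReal_ofNat, log_one_add_exp_two_mul_I_s18 hlt, inv_im, normSq_add_mul_I,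
        add_im, ofReal_im, mul_I_im, ofReal_re, zero_add]
    rw [invLogOneAddRemainder, add_im, sub_im, sub_im, hlog, hw_inv, div_ofNat_im, div_ofNat_im,
      hw, one_im]
    ring
  · have hsin : Real.sin (2 * x) = 0 := by
      rcases abs_eq (by positivity) |>.1 hend with h | h <;> simp [h, mul_div_cancel₀]
    simp [hsin]

theorem intervalIntegral.integral_neg_self_of_even {E : Type*} [NormedAddCommGroup E]
    [NormedSpace ℝ E] {f : ℝ → E} {a : ℝ} (heven : ∀ x, f (-x) = f x)
    (hf : IntervalIntegrable f MeasureTheory.volume (-a) a) :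
    ∫ x in -a..a, f x = (2 : ℝ) • ∫ x in 0..a, f x := by
  have h0 : (0 : ℝ) ∈ Set.uIcc (-a) a := by
    rcases le_total 0 a with h | h <;> simp [h]
  rw [← integral_add_adjacent_intervals (hf.mono_set (Set.uIcc_subset_uIcc_left h0))
    (hf.mono_set (Set.uIcc_subset_uIcc_right h0)), two_smul]
  congr 1
  calc ∫ x in -a..0, f x = ∫ x in 0..a, f (-x) := by rw [integral_comp_neg, neg_zero]
    _ = ∫ x in 0..a, f x := by simp_rw [heven]

lemma integral_sin_two_mul_sq : ∫ x in -(π / 2)..π / 2, Real.sin (2 * x) ^ 2 = π / 2 := by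
  rw [intervalIntegral.integral_comp_mul_left (fun x => Real.sin x ^ 2) two_ne_zero,
    integral_sin_sq]
  simp [mul_div_cancel₀, add_self_div_two, inv_mul_eq_div]

lemma integral_sin_two_mul_mul_im_invLogOneAddRemainder :
    ∫ x in -(π / 2)..π / 2,
      Real.sin (2 * x) * (invLogOneAddRemainder (exp (↑(2 * x) * I))).im = 0 := by
  rw [intervalIntegral.integral_comp_mul_left
      (fun θ => Real.sin θ * (invLogOneAddRemainder (exp (θ * I))).im) two_ne_zero,
    mul_neg, mul_div_cancel₀ _ two_ne_zero, integral_sin_mul_im_invLogOneAddRemainder, smul_zero]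

/-- `∫_0^{π/2} x sin 2x /(x² + ln²(2 cos x)) dx = 13π/48`. -/
theorem integral_x_sin_div_two_cos :
    ∫ x in (0:ℝ)..(π/2),
        x * Real.sin (2 * x) / (x ^ 2 + Real.log (2 * Real.cos x) ^ 2)
    = 13 * π / 48 := by
  set F := fun x : ℝ => x * Real.sin (2 * x) / (x ^ 2 + Real.log (2 * Real.cos x) ^ 2)
  set S := fun x : ℝ => Real.sin (2 * x) * (invLogOneAddRemainder (exp (↑(2 * x) * I))).im
  have hS : Continuous S :=
    continuous_sin_mul_im_invLogOneAddRemainder.comp (continuous_const_mul 2)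
  have hsq : Continuous fun x : ℝ => 13 / 12 * Real.sin (2 * x) ^ 2 := by fun_prop
  have hFG : Set.EqOn F (fun x => 13 / 12 * Real.sin (2 * x) ^ 2 - S x)
      (Set.uIcc (-(π / 2)) (π / 2)) := by
    rw [Set.uIcc_of_le (by linarith [Real.pi_pos])]
    exact fun x hx => mul_sin_two_mul_div_eq hx
  have heven : ∀ x, F (-x) = F x := fun x => by simp [F]
  calc ∫ x in 0..π / 2, F x = 1 / 2 * ∫ x in -(π / 2)..π / 2, F x := by
        rw [intervalIntegral.integral_neg_self_of_even heven
          (((hsq.sub hS).continuousOn.congr hFG).intervalIntegrable), smul_eq_mul]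
        ring
    _ = 1 / 2 * (13 / 12 * (π / 2) - 0) := by
        rw [intervalIntegral.integral_congr hFG,
          intervalIntegral.integral_sub (hsq.intervalIntegrable _ _) (hS.intervalIntegrable _ _),
          intervalIntegral.integral_const_mul, integral_sin_two_mul_sq,
          integral_sin_two_mul_mul_im_invLogOneAddRemainder]
    _ = 13 * π / 48 := by ring
end
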